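/- Let $\theta^1 > \cdots > \theta^K$ with prior $\mu_0$, cost $c$ with $\theta^K \le c < \theta^1$ and $v_0 := \mathbb{E}[\theta] > c$, and let $(k^*, q^*)$ be the tipping point of the sequential self-conquering process. For each type define $W(\theta^k) = \int_0^1 w_k^N(q)\,dq$ where $w_k^N(q) = \max\{v_k^N(q) - c, 0\}$. Then for all $k$ with $\theta^k > \theta^{k^*}$: $\mathbb{E}[\theta \mid \theta \le \theta^k] > W(\theta^k) + c > \mathbb{E}[\theta \mid \theta \le \theta^{k+1}]$. Consequently, $W$ is nonincreasing across types ($W(\theta^{k_1}) \ge W(\theta^{k_2})$ whenever $\theta^{k_1} > \theta^{k_2}$), with strict inequality whenever $\theta^{k_1} > \theta^{k^*}$. -/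

import Mathlib

open Finset

/-- Sequential self-conquering skepticism posterior mean. -/
noncomputable def vNk {K : ℕ} (θ μ : Fin K → ℝ) (k : Fin K) (q : ℝ) : ℝ :=
  (μ k * (1 - q) * θ k + ∑ j ∈ univ.filter (fun j => k < j), μ j * θ j) /
    (μ k * (1 - q) + ∑ j ∈ univ.filter (fun j => k < j), μ j)

/-- Sequential self-conquering skepticism value. -/
noncomputable def wNk {K : ℕ} (θ μ : Fin K → ℝ) (c : ℝ) (k : Fin K) (q : ℝ) : ℝ :=
  max (vNk θ μ k q - c) 0

/-- Equilibrium rent of producer type `θ^k` under the robustly optimal menu profile. -/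
noncomputable def rent {K : ℕ} (θ μ : Fin K → ℝ) (c : ℝ) (k : Fin K) : ℝ :=
  ∫ q in (0:ℝ)..1, wNk θ μ c k q

/-- Truncated prior mean `E[θ ∣ θ ≤ θ^k]`. -/
noncomputable def truncMean {K : ℕ} (θ μ : Fin K → ℝ) (k : Fin K) : ℝ :=
  (∑ j ∈ univ.filter (fun j => k ≤ j), μ j * θ j) /
    (∑ j ∈ univ.filter (fun j => k ≤ j), μ j)

namespace Stmt12Aux

/-- Tail probability mass. -/
noncomputable def S {K : ℕ} (μ : Fin K → ℝ) (k : Fin K) : ℝ :=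
  ∑ j ∈ univ.filter (fun j => k < j), μ j

/-- Tail weighted sum. -/
noncomputable def T {K : ℕ} (θ μ : Fin K → ℝ) (k : Fin K) : ℝ :=
  ∑ j ∈ univ.filter (fun j => k < j), μ j * θ j

variable {K : ℕ} {θ μ : Fin K → ℝ} {c : ℝ} {k l : Fin K}

lemma S_nonneg (hμ : ∀ k, 0 < μ k) : 0 ≤ S μ k :=
  Finset.sum_nonneg fun j _ => (hμ j).le

lemma S_pos (hμ : ∀ k, 0 < μ k) (h : k.val + 1 < K) : 0 < S μ k := by
  refine Finset.sum_pos' (fun j _ => (hμ j).le) ⟨⟨k.val + 1, h⟩, ?_, hμ _⟩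
  simp only [Finset.mem_filter, Finset.mem_univ, true_and, Fin.lt_def]
  omega

lemma T_lt (hθ : StrictAnti θ) (hμ : ∀ k, 0 < μ k) (hS : 0 < S μ k) :
    T θ μ k < θ k * S μ k := by
  have hne : (univ.filter (fun j => k < j)).Nonempty := by
    by_contra h
    rw [Finset.not_nonempty_iff_eq_empty] at h
    simp [S, h] at hS
  rw [S, Finset.mul_sum]
  refine Finset.sum_lt_sum_of_nonempty hne fun j hj => ?_
  have hkj : k < j := (Finset.mem_filter.1 hj).2
  have := hθ hkj
  nlinarith [hμ j]

lemma D_pos (hμ : ∀ k, 0 < μ k) (hS : 0 < S μ k) {q : ℝ} (hq : q ≤ 1) :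
    0 < μ k * (1 - q) + S μ k := by
  have := mul_nonneg (hμ k).le (by linarith : (0:ℝ) ≤ 1 - q)
  linarith

lemma vN_strictAnti (hθ : StrictAnti θ) (hμ : ∀ k, 0 < μ k) (hS : 0 < S μ k)
    {p q : ℝ} (hp : 0 ≤ p) (hpq : p < q) (hq : q ≤ 1) :
    vNk θ μ k q < vNk θ μ k p := by
  have hDq := D_pos hμ hS hq
  have hDp := D_pos hμ hS (by linarith : p ≤ 1)
  have hT := T_lt hθ hμ hS
  have e : ∀ r : ℝ, vNk θ μ k r =
      (μ k * (1 - r) * θ k + T θ μ k) / (μ k * (1 - r) + S μ k) := fun r => rfl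
  rw [e, e, div_lt_div_iff₀ hDq hDp]
  nlinarith [mul_pos (mul_pos (hμ k) (sub_pos.2 hpq)) (sub_pos.2 hT)]

lemma vN_anti (hθ : StrictAnti θ) (hμ : ∀ k, 0 < μ k) (hS : 0 < S μ k)
    {p q : ℝ} (hp : 0 ≤ p) (hpq : p ≤ q) (hq : q ≤ 1) :
    vNk θ μ k q ≤ vNk θ μ k p := by
  rcases eq_or_lt_of_le hpq with h | h
  · rw [h]
  · exact (vN_strictAnti hθ hμ hS hp h hq).le

lemma vN_zero : vNk θ μ k 0 = truncMean θ μ k := by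
  have hset : univ.filter (fun j => k ≤ j) = insert k (univ.filter (fun j => k < j)) := by
    ext j
    simp only [Finset.mem_filter, Finset.mem_univ, true_and, Finset.mem_insert,
      Fin.le_def, Fin.lt_def, Fin.ext_iff]
    omega
  have hk : k ∉ univ.filter (fun j => k < j) := by simp
  rw [vNk, truncMean, hset, Finset.sum_insert hk, Finset.sum_insert hk]
  norm_num

lemma vN_one (hl : l.val = k.val + 1) : vNk θ μ k 1 = truncMean θ μ l := by
  have hset : univ.filter (fun j => l ≤ j) = univ.filter (fun j => k < j) := by
    ext j
    simp only [Finset.mem_filter, Finset.mem_univ, true_and, Fin.le_def, Fin.lt_def, hl]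
    omega
  rw [vNk, truncMean, hset]
  norm_num

lemma wN_cont (hμ : ∀ k, 0 < μ k) (hS : 0 < S μ k) :
    ContinuousOn (wNk θ μ c k) (Set.Icc (0:ℝ) 1) := by
  have hv : ContinuousOn (vNk θ μ k) (Set.Icc (0:ℝ) 1) := by
    apply ContinuousOn.div
    · fun_prop
    · fun_prop
    · exact fun q hq => (D_pos hμ hS hq.2).ne'
  exact (hv.sub continuousOn_const).sup continuousOn_const

lemma wN_intg (hμ : ∀ k, 0 < μ k) (hS : 0 < S μ k) :
    IntervalIntegrable (wNk θ μ c k) MeasureTheory.volume 0 1 := by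
  have h : ContinuousOn (wNk θ μ c k) (Set.uIcc (0:ℝ) 1) := by
    rw [Set.uIcc_of_le (by norm_num : (0:ℝ) ≤ 1)]
    exact wN_cont hμ hS
  exact h.intervalIntegrable

lemma wN_last (hμ : ∀ k, 0 < μ k) (hlast : k.val + 1 = K) (hc : θ k ≤ c) (hc0 : 0 ≤ c) :
    ∀ q : ℝ, wNk θ μ c k q = 0 := by
  intro q
  have hempty : univ.filter (fun j => k < j) = (∅ : Finset (Fin K)) := by
    ext j
    simp only [Finset.mem_filter, Finset.mem_univ, true_and, Fin.lt_def,
      Finset.notMem_empty, iff_false]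
    omega
  rw [wNk, vNk, hempty]
  simp only [Finset.sum_empty, add_zero]
  rcases eq_or_ne q 1 with h | h
  · subst h
    norm_num
    exact hc0
  · have ha : μ k * (1 - q) ≠ 0 := by
      have := hμ k
      intro hcon
      rcases mul_eq_zero.1 hcon with h1 | h2
      · linarith
      · exact h (by linarith)
    rw [mul_div_cancel_left₀ _ ha, max_eq_right (by linarith)]

lemma part1 (hθ : StrictAnti θ) (hμ : ∀ k, 0 < μ k) (hl : l.val = k.val + 1)
    (hpos : ∀ q ∈ Set.Icc (0:ℝ) 1, c < vNk θ μ k q) :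
    truncMean θ μ k > rent θ μ c k + c ∧ rent θ μ c k + c > truncMean θ μ l := by
  have hS : 0 < S μ k := S_pos hμ (hl ▸ l.isLt)
  have hintg := wN_intg (θ := θ) (c := c) hμ hS
  have hw : ∀ q ∈ Set.Icc (0:ℝ) 1, wNk θ μ c k q = vNk θ μ k q - c := fun q hq =>
    max_eq_left (by linarith [hpos q hq])
  constructor
  · have h1 : 0 < ∫ q in (0:ℝ)..1, (truncMean θ μ k - c - wNk θ μ c k q) := by
      apply intervalIntegral.intervalIntegral_pos_of_pos_on
        (intervalIntegrable_const.sub hintg) _ (by norm_num)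
      intro x hx
      have h2 : vNk θ μ k x < vNk θ μ k 0 := vN_strictAnti hθ hμ hS le_rfl hx.1 hx.2.le
      rw [hw x ⟨hx.1.le, hx.2.le⟩]
      rw [vN_zero] at h2
      linarith
    rw [intervalIntegral.integral_sub intervalIntegrable_const hintg,
      intervalIntegral.integral_const] at h1
    simp only [smul_eq_mul, sub_zero, one_mul] at h1
    rw [rent] at *
    linarith
  · have h1 : 0 < ∫ q in (0:ℝ)..1, (wNk θ μ c k q - (truncMean θ μ l - c)) := by
      apply intervalIntegral.intervalIntegral_pos_of_pos_on
        (hintg.sub intervalIntegrable_const) _ (by norm_num)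
      intro x hx
      have h2 : vNk θ μ k 1 < vNk θ μ k x := vN_strictAnti hθ hμ hS hx.1.le hx.2 le_rfl
      rw [hw x ⟨hx.1.le, hx.2.le⟩]
      rw [vN_one hl] at h2
      linarith
    rw [intervalIntegral.integral_sub hintg intervalIntegrable_const,
      intervalIntegral.integral_const] at h1
    simp only [smul_eq_mul, sub_zero, one_mul] at h1
    rw [rent] at *
    linarith

lemma rent_pos (hμ : ∀ k, 0 < μ k) (hS : 0 < S μ k)
    (hpos : ∀ q ∈ Set.Icc (0:ℝ) 1, c < vNk θ μ k q) : 0 < rent θ μ c k := by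
  apply intervalIntegral.intervalIntegral_pos_of_pos_on (wN_intg hμ hS) _ (by norm_num)
  intro x hx
  exact lt_of_lt_of_le (sub_pos.2 (hpos x ⟨hx.1.le, hx.2.le⟩)) (le_max_left _ _)

lemma rent_nonneg : 0 ≤ rent θ μ c k :=
  intervalIntegral.integral_nonneg (by norm_num) (fun u _ => le_max_right _ _)

lemma rent_le_max (hθ : StrictAnti θ) (hμ : ∀ k, 0 < μ k) (hS : 0 < S μ k) :
    rent θ μ c k ≤ max (truncMean θ μ k - c) 0 := by
  have h1 : rent θ μ c k ≤ ∫ _ in (0:ℝ)..1, wNk θ μ c k 0 := by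
    apply intervalIntegral.integral_mono_on (by norm_num) (wN_intg hμ hS)
      intervalIntegrable_const
    intro x hx
    exact max_le_max (sub_le_sub_right (vN_anti hθ hμ hS le_rfl hx.1 hx.2) c) le_rfl
  have h2 : wNk θ μ c k 0 = max (truncMean θ μ k - c) 0 := by rw [wNk, vN_zero]
  rw [intervalIntegral.integral_const] at h1
  simp only [smul_eq_mul, sub_zero, one_mul] at h1
  rwa [h2] at h1

lemma step (hθ : StrictAnti θ) (hμ : ∀ k, 0 < μ k) (hc0 : 0 ≤ c)
    (hcl : ∀ m : Fin K, m.val + 1 = K → θ m ≤ c) (hl : l.val = k.val + 1) :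
    rent θ μ c l ≤ rent θ μ c k := by
  have hSk : 0 < S μ k := S_pos hμ (hl ▸ l.isLt)
  by_cases hKl : l.val + 1 < K
  · have hSl := S_pos (k := l) hμ hKl
    have e1 : wNk θ μ c l 0 = wNk θ μ c k 1 := by rw [wNk, wNk, vN_zero, vN_one hl]
    have h1 : rent θ μ c l ≤ ∫ _ in (0:ℝ)..1, wNk θ μ c k 1 := by
      apply intervalIntegral.integral_mono_on (by norm_num) (wN_intg hμ hSl)
        intervalIntegrable_const
      intro x hx
      rw [← e1]
      exact max_le_max (sub_le_sub_right (vN_anti hθ hμ hSl le_rfl hx.1 hx.2) c) le_rfl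
    have h2 : (∫ _ in (0:ℝ)..1, wNk θ μ c k 1) ≤ rent θ μ c k := by
      apply intervalIntegral.integral_mono_on (by norm_num) intervalIntegrable_const
        (wN_intg hμ hSk)
      intro x hx
      exact max_le_max (sub_le_sub_right (vN_anti hθ hμ hSk hx.1 hx.2 le_rfl) c) le_rfl
    linarith
  · have hlast : l.val + 1 = K := by have := l.isLt; omega
    have h0 : ∀ q : ℝ, wNk θ μ c l q = 0 := wN_last hμ hlast (hcl l hlast) hc0
    have hz : rent θ μ c l = 0 := by simp [rent, h0]
    rw [hz]
    exact rent_nonneg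

end Stmt12Aux

/-- Producer rents are bounded between adjacent truncated means and monotone across types,
strictly above the tipping-point type. -/
theorem stmt_12 (K : ℕ) (hK : 2 ≤ K) (θ μ : Fin K → ℝ) (c : ℝ)
    (hθ : StrictAnti θ) (hθlast : 0 ≤ θ ⟨K - 1, by omega⟩)
    (hμ : ∀ k, 0 < μ k) (hμsum : ∑ k, μ k = 1)
    (hc1 : θ ⟨K - 1, by omega⟩ ≤ c) (hc2 : c < θ ⟨0, by omega⟩)
    (hmean : (∑ k, μ k * θ k) > c)
    (kstar : Fin K) (qstar : ℝ)
    (hkstar : IsLeast {k : Fin K | ∃ q ∈ Set.Icc (0:ℝ) 1, wNk θ μ c k q = 0} kstar)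
    (hqstar : IsLeast {q ∈ Set.Icc (0:ℝ) 1 | wNk θ μ c kstar q = 0} qstar) :
    (∀ k l : Fin K, l.val = k.val + 1 → θ kstar < θ k →
      truncMean θ μ k > rent θ μ c k + c ∧ rent θ μ c k + c > truncMean θ μ l) ∧
    (∀ k₁ k₂ : Fin K, θ k₂ < θ k₁ → rent θ μ c k₂ ≤ rent θ μ c k₁) ∧
    (∀ k₁ k₂ : Fin K, θ k₂ < θ k₁ → θ kstar < θ k₁ → rent θ μ c k₂ < rent θ μ c k₁) := by
  classical
  open Stmt12Aux in
  have hc0 : (0:ℝ) ≤ c := le_trans hθlast hc1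
  have hcl : ∀ m : Fin K, m.val + 1 = K → θ m ≤ c := by
    intro m hm
    have : m = ⟨K - 1, by omega⟩ := Fin.ext (by simp; omega)
    rw [this]; exact hc1
  have hpos : ∀ k : Fin K, k < kstar → ∀ q ∈ Set.Icc (0:ℝ) 1, c < vNk θ μ k q := by
    intro k hk q hq
    by_contra hcon
    push_neg at hcon
    have hz : wNk θ μ c k q = 0 := max_eq_right (by linarith)
    exact absurd (hkstar.2 ⟨q, hq, hz⟩) (not_le.2 hk)
  have hstep : ∀ k l : Fin K, l.val = k.val + 1 → rent θ μ c l ≤ rent θ μ c k :=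
    fun k l hl => step hθ hμ hc0 hcl hl
  have mono : ∀ n : ℕ, ∀ k₁ k₂ : Fin K, k₁ ≤ k₂ → k₂.val - k₁.val ≤ n →
      rent θ μ c k₂ ≤ rent θ μ c k₁ := by
    intro n
    induction n with
    | zero =>
      intro k₁ k₂ h hd
      have : k₁ = k₂ := Fin.ext (by have := Fin.le_def.1 h; omega)
      rw [this]
    | succ n ih =>
      intro k₁ k₂ h hd
      rcases eq_or_lt_of_le h with he | hlt
      · rw [he]
      · have h1 : k₁.val + 1 ≤ k₂.val := Fin.lt_def.1 hlt
        have hx : k₁.val + 1 < K := lt_of_le_of_lt h1 k₂.isLt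
        set l : Fin K := ⟨k₁.val + 1, hx⟩ with hldef
        have h2 : rent θ μ c k₂ ≤ rent θ μ c l :=
          ih l k₂ (Fin.le_def.2 (by simp [hldef]; omega)) (by simp [hldef]; omega)
        exact le_trans h2 (hstep k₁ l rfl)
  have part1' : ∀ k l : Fin K, l.val = k.val + 1 → θ kstar < θ k →
      truncMean θ μ k > rent θ μ c k + c ∧ rent θ μ c k + c > truncMean θ μ l := by
    intro k l hl hks
    exact part1 hθ hμ hl (hpos k (hθ.lt_iff_gt.1 hks))
  refine ⟨part1', ?_, ?_⟩
  · intro k₁ k₂ h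
    exact mono K k₁ k₂ (le_of_lt (hθ.lt_iff_gt.1 h)) (by omega)
  · intro k₁ k₂ h hks
    have hk12 : k₁ < k₂ := hθ.lt_iff_gt.1 h
    have hk1s : k₁ < kstar := hθ.lt_iff_gt.1 hks
    have hlval : k₁.val + 1 < K := lt_of_le_of_lt (Fin.lt_def.1 hk12) k₂.isLt
    set l : Fin K := ⟨k₁.val + 1, hlval⟩ with hldef
    have hp1 := part1 (l := l) hθ hμ rfl (hpos k₁ hk1s)
    have h2 : rent θ μ c k₂ ≤ rent θ μ c l :=
      mono K l k₂ (Fin.le_def.2 (by simp [hldef]; exact Fin.lt_def.1 hk12)) (by omega)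
    have hr1 : 0 < rent θ μ c k₁ := rent_pos hμ (S_pos hμ hlval) (hpos k₁ hk1s)
    by_cases hKl : l.val + 1 < K
    · have h3 := rent_le_max (c := c) hθ hμ (S_pos (k := l) hμ hKl)
      have h4 : max (truncMean θ μ l - c) 0 < rent θ μ c k₁ :=
        max_lt (by linarith [hp1.2]) hr1
      linarith
    · have hlast : l.val + 1 = K := by have := l.isLt; omega
      have h0 : ∀ q : ℝ, wNk θ μ c l q = 0 := wN_last hμ hlast (hcl l hlast) hc0
      have hz : rent θ μ c l = 0 := by simp [rent, h0]
      linarith
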